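/- arXiv:1906.06330 — 4 statements merged into one kernel-verified Lean document; each statement's English description precedes it below -/
import Mathlib

section
/- If k ≥ 1, n ≥ m ≥ 0 are integers with x_k = L_n·L_m, then α^{n+m−2} ≤ x_k < δᵏ/α and δᵏ/α² ≤ x_k ≤ α^{n+m+4}. -/
/-- The Lucas numbers: L₀ = 2, L₁ = 1, L_{n+2} = L_{n+1} + L_n. -/
def lucas : ℕ → ℕ
  | 0 => 2
  | 1 => 1
  | n + 2 => lucas (n + 1) + lucas n

/-- The golden ratio α = (1 + √5)/2. -/
noncomputable def alpha : ℝ := (1 + Real.sqrt 5) / 2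

lemma sqrt5_sq : Real.sqrt 5 ^ 2 = 5 := Real.sq_sqrt (by norm_num)

lemma sqrt5_lb : (2.2 : ℝ) ≤ Real.sqrt 5 := by
  rw [show (2.2:ℝ) = Real.sqrt (2.2^2) by rw [Real.sqrt_sq]; norm_num]
  exact Real.sqrt_le_sqrt (by norm_num)

lemma sqrt5_ub : Real.sqrt 5 ≤ 2.24 := by
  nlinarith [sqrt5_sq, Real.sqrt_nonneg 5]

lemma alpha_gt_one : (1 : ℝ) < alpha := by
  unfold alpha; nlinarith [sqrt5_lb]

lemma alpha_pos : (0 : ℝ) < alpha := lt_trans one_pos alpha_gt_one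

lemma alpha_sq : alpha ^ 2 = alpha + 1 := by
  unfold alpha; nlinarith [sqrt5_sq]

lemma alpha_lb : (1.6 : ℝ) ≤ alpha := by unfold alpha; nlinarith [sqrt5_lb]

lemma alpha_ub : alpha ≤ 1.62 := by unfold alpha; nlinarith [sqrt5_ub]

lemma alpha_zpow_rec (z : ℤ) : alpha ^ (z + 2) = alpha ^ (z + 1) + alpha ^ z := by
  have hne := ne_of_gt alpha_pos
  have hmul : alpha * alpha = alpha + 1 := by rw [← sq]; exact alpha_sq
  rw [zpow_add₀ hne z 2, zpow_add₀ hne z 1, zpow_one, zpow_two, hmul]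
  ring

lemma lucas_lower (n : ℕ) : alpha ^ ((n : ℤ) - 1) ≤ (lucas n : ℝ) := by
  induction n using Nat.twoStepInduction with
  | zero =>
    simp only [lucas, Nat.cast_ofNat, Nat.cast_zero]
    rw [show (0:ℤ) - 1 = -1 by ring, zpow_neg, zpow_one]
    rw [inv_le_comm₀ alpha_pos (by norm_num)]
    nlinarith [alpha_lb]
  | one => simp [lucas]
  | more n ih1 ih2 =>
    have h : alpha ^ ((n : ℤ) + 2 - 1) = alpha ^ ((n : ℤ) + 1 - 1) + alpha ^ ((n : ℤ) - 1) := by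
      rw [show (n:ℤ) + 2 - 1 = ((n:ℤ) - 1) + 2 by ring,
        show (n:ℤ) + 1 - 1 = ((n:ℤ) - 1) + 1 by ring]
      exact alpha_zpow_rec _
    have hcast : ((lucas (n+2) : ℕ) : ℝ) = (lucas (n+1) : ℝ) + (lucas n : ℝ) := by
      simp [lucas]
    push_cast at hcast ⊢
    rw [show ((n:ℤ) + 2 - 1) = (n:ℤ) + 2 - 1 from rfl] at *
    calc alpha ^ ((n : ℤ) + 2 - 1) = alpha ^ ((n : ℤ) + 1 - 1) + alpha ^ ((n : ℤ) - 1) := h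
      _ ≤ (lucas (n+1) : ℝ) + (lucas n : ℝ) := by
          push_cast at ih1 ih2; exact add_le_add ih2 ih1
      _ = ((lucas (n+2) : ℕ) : ℝ) := hcast.symm

lemma lucas_upper (n : ℕ) : (lucas n : ℝ) ≤ alpha ^ ((n : ℤ) + 2) := by
  induction n using Nat.twoStepInduction with
  | zero =>
    simp only [lucas, Nat.cast_ofNat, Nat.cast_zero, zero_add]
    rw [zpow_two]
    nlinarith [alpha_lb]
  | one =>
    simp only [lucas, Nat.cast_one]
    calc (1:ℝ) ≤ alpha := le_of_lt alpha_gt_one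
      _ = alpha ^ (1:ℤ) := (zpow_one _).symm
      _ ≤ alpha ^ ((1:ℤ) + 2) := zpow_le_zpow_right₀ (le_of_lt alpha_gt_one) (by norm_num)
  | more n ih1 ih2 =>
    have h : alpha ^ ((n : ℤ) + 2 + 2) = alpha ^ ((n : ℤ) + 1 + 2) + alpha ^ ((n : ℤ) + 2) := by
      rw [show (n:ℤ) + 2 + 2 = ((n:ℤ) + 2) + 2 by ring,
        show (n:ℤ) + 1 + 2 = ((n:ℤ) + 2) + 1 by ring]
      exact alpha_zpow_rec _
    have hcast : ((lucas (n+2) : ℕ) : ℝ) = (lucas (n+1) : ℝ) + (lucas n : ℝ) := by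
      simp [lucas]
    calc ((lucas (n+2) : ℕ) : ℝ) = (lucas (n+1) : ℝ) + (lucas n : ℝ) := hcast
      _ ≤ alpha ^ ((n : ℤ) + 1 + 2) + alpha ^ ((n : ℤ) + 2) := by
          push_cast at ih1 ih2 ⊢; exact add_le_add ih2 ih1
      _ = alpha ^ ((n : ℤ) + 2 + 2) := h.symm
    
lemma mid1 (t e a : ℝ) (ht : 0 < t) (ht2 : 5.8 ≤ t ^ 2) (he : e * t ≤ 1)
    (ha1 : 1 < a) (ha2 : a ≤ 1.62) : (t + e) / 2 * a < t := by
  nlinarith [mul_pos ht ht, mul_nonneg (by linarith : (0:ℝ) ≤ 1 - e * t) (by linarith : (0:ℝ) ≤ a),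
    mul_nonneg (by linarith : (0:ℝ) ≤ 1.62 - a) (by linarith : (0:ℝ) ≤ t ^ 2 - 5.8)]

lemma mid2 (t e a : ℝ) (ht : 0 < t) (ht2 : 5.8 ≤ t ^ 2) (he : -1 ≤ e * t)
    (ha : 1.6 ≤ a) (hasq : a ^ 2 = a + 1) : t ≤ (t + e) / 2 * a ^ 2 := by
  nlinarith [mul_pos ht ht, mul_nonneg (by linarith : (0:ℝ) ≤ e * t + 1) (by linarith : (0:ℝ) ≤ a + 1),
    mul_nonneg (by linarith : (0:ℝ) ≤ a - 1.6) (by linarith : (0:ℝ) ≤ t ^ 2 - 1)]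

set_option maxHeartbeats 1600000 in
theorem stmt_4
    (d x1 y1 : ℕ) (ε : ℤ) (δ η : ℝ) (X : ℕ → ℝ)
    (hd : 2 ≤ d) (hdsf : Squarefree d)
    (hx1 : 1 ≤ x1) (hy1 : 1 ≤ y1)
    (hε : (x1 : ℤ) ^ 2 - (d : ℤ) * (y1 : ℤ) ^ 2 = ε)
    (hεpm : ε = 1 ∨ ε = -1)
    (hmin : ∀ x y : ℕ, 1 ≤ x → 1 ≤ y →
      ((x : ℤ) ^ 2 - (d : ℤ) * (y : ℤ) ^ 2 = 1 ∨
        (x : ℤ) ^ 2 - (d : ℤ) * (y : ℤ) ^ 2 = -1) → x1 ≤ x)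
    (hδ : δ = (x1 : ℝ) + (y1 : ℝ) * Real.sqrt d)
    (hη : η = (x1 : ℝ) - (y1 : ℝ) * Real.sqrt d)
    (hX : ∀ k : ℕ, X k = (δ ^ k + η ^ k) / 2)
    (k n m : ℕ) (hk : 1 ≤ k) (hnm : m ≤ n)
    (hsol : X k = ((lucas n * lucas m : ℕ) : ℝ)) :
    alpha ^ ((n : ℤ) + (m : ℤ) - 2) ≤ X k ∧ X k < δ ^ k / alpha ∧
    δ ^ k / alpha ^ 2 ≤ X k ∧ X k ≤ alpha ^ ((n : ℤ) + (m : ℤ) + 4) := by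
  have hαpos := alpha_pos
  have hα1 := alpha_gt_one
  have hαsq := alpha_sq
  have hαlb := alpha_lb
  have hαub := alpha_ub
  -- sqrt d bounds
  have hsd_sq : Real.sqrt d ^ 2 = (d : ℝ) := Real.sq_sqrt (by positivity)
  have hsd_lb : (1.41 : ℝ) ≤ Real.sqrt d := by
    have h2 : (2 : ℝ) ≤ (d : ℝ) := by exact_mod_cast hd
    have : Real.sqrt (1.41 ^ 2) ≤ Real.sqrt d := Real.sqrt_le_sqrt (by nlinarith)
    rwa [Real.sqrt_sq (by norm_num)] at this
  have hx1' : (1 : ℝ) ≤ (x1 : ℝ) := by exact_mod_cast hx1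
  have hy1' : (1 : ℝ) ≤ (y1 : ℝ) := by exact_mod_cast hy1
  have hδlb : (2.41 : ℝ) ≤ δ := by
    rw [hδ]; nlinarith
  have hδpos : (0 : ℝ) < δ := by linarith
  -- t := δ^k
  set t : ℝ := δ ^ k with ht
  have htδ : δ ≤ t := by
    calc δ = δ ^ 1 := (pow_one δ).symm
      _ ≤ δ ^ k := pow_le_pow_right₀ (by linarith) hk
  have htpos : (0 : ℝ) < t := lt_of_lt_of_le hδpos htδ
  have ht2 : (5.8 : ℝ) ≤ t ^ 2 := by nlinarith
  -- η δ = ε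
  have hηδ : η * δ = (ε : ℝ) := by
    rw [hη, hδ]
    have : ((x1:ℝ) - y1 * Real.sqrt d) * ((x1:ℝ) + y1 * Real.sqrt d)
        = (x1:ℝ)^2 - (d:ℝ) * (y1:ℝ)^2 := by nlinarith [hsd_sq]
    rw [this]
    exact_mod_cast congrArg (fun z : ℤ => (z : ℝ)) hε
  have hηk : η ^ k * t = ((ε : ℝ)) ^ k := by
    rw [ht, ← mul_pow, hηδ]
  have hbd : -1 ≤ η ^ k * t ∧ η ^ k * t ≤ 1 := by
    rw [hηk]
    rcases hεpm with h | h <;> subst h <;> push_cast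
    · norm_num
    · rcases Nat.even_or_odd k with he | ho
      · rw [he.neg_one_pow]; norm_num
      · rw [ho.neg_one_pow]; norm_num
  obtain ⟨hbd1, hbd2⟩ := hbd
  have hXk : X k = (t + η ^ k) / 2 := hX k
  refine ⟨?_, ?_, ?_, ?_⟩
  · -- lower bound with lucas
    rw [hsol]
    have l1 := lucas_lower n
    have l2 := lucas_lower m
    have hsplit : alpha ^ ((n : ℤ) + (m : ℤ) - 2)
        = alpha ^ ((n : ℤ) - 1) * alpha ^ ((m : ℤ) - 1) := by
      rw [← zpow_add₀ (ne_of_gt hαpos)]; ring_nf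
    rw [hsplit]
    push_cast
    exact mul_le_mul l1 l2 (le_of_lt (zpow_pos hαpos _)) (Nat.cast_nonneg _)
  · -- X k < δ^k / α
    rw [lt_div_iff₀ hαpos, hXk]
    have h := mid1 t (η ^ k) alpha htpos ht2 hbd2 hα1 hαub
    linarith
  · -- δ^k / α^2 ≤ X k
    rw [div_le_iff₀ (by positivity : (0:ℝ) < alpha ^ 2), hXk]
    have h := mid2 t (η ^ k) alpha htpos ht2 hbd1 hαlb hαsq
    linarith
  · -- upper bound with lucas
    rw [hsol]
    have l1 := lucas_upper n
    have l2 := lucas_upper m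
    have hsplit : alpha ^ ((n : ℤ) + (m : ℤ) + 4)
        = alpha ^ ((n : ℤ) + 2) * alpha ^ ((m : ℤ) + 2) := by
      rw [← zpow_add₀ (ne_of_gt hαpos)]; ring_nf
    rw [hsplit]
    push_cast
    exact mul_le_mul l1 l2 (Nat.cast_nonneg _) (le_of_lt (zpow_pos hαpos _))
end

section
/- Under the two-solution setup, k₁ < k₂ < (4/3)·n₄ + 4. -/
set_option maxHeartbeats 1000000


lemma lucas_le_pow (n : ℕ) : (lucas n : ℝ) ≤ 2 * (5/3 : ℝ) ^ n := by
  induction n using Nat.twoStepInduction with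
  | zero => norm_num [lucas]
  | one => norm_num [lucas]
  | more n ih1 ih2 =>
    have : (lucas (n+2) : ℝ) = (lucas (n+1) : ℝ) + (lucas n : ℝ) := by
      rw [show lucas (n+2) = lucas (n+1) + lucas n from rfl]; push_cast; ring
    rw [this]
    have h : (2 : ℝ) * (5/3)^(n+1) + 2 * (5/3)^n ≤ 2 * (5/3)^(n+2) := by
      have hp : (0:ℝ) < (5/3:ℝ)^n := by positivity
      rw [pow_succ, pow_succ, pow_succ]
      nlinarith
    linarith

theorem stmt_5
    (d x1 y1 : ℕ) (ε : ℤ) (δ η : ℝ) (X : ℕ → ℝ)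
    (hd : 2 ≤ d) (hdsf : Squarefree d)
    (hx1 : 1 ≤ x1) (hy1 : 1 ≤ y1)
    (hε : (x1 : ℤ) ^ 2 - (d : ℤ) * (y1 : ℤ) ^ 2 = ε)
    (hεpm : ε = 1 ∨ ε = -1)
    (hmin : ∀ x y : ℕ, 1 ≤ x → 1 ≤ y →
      ((x : ℤ) ^ 2 - (d : ℤ) * (y : ℤ) ^ 2 = 1 ∨
        (x : ℤ) ^ 2 - (d : ℤ) * (y : ℤ) ^ 2 = -1) → x1 ≤ x)
    (hδ : δ = (x1 : ℝ) + (y1 : ℝ) * Real.sqrt d)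
    (hη : η = (x1 : ℝ) - (y1 : ℝ) * Real.sqrt d)
    (hX : ∀ k : ℕ, X k = (δ ^ k + η ^ k) / 2)
    (k1 n1 m1 k2 n2 m2 : ℕ)
    (hk1 : 1 ≤ k1) (hk2 : 1 ≤ k2) (hk12 : k1 < k2)
    (hnm1 : m1 ≤ n1) (hnm2 : m2 ≤ n2)
    (hsol1 : X k1 = ((lucas n1 * lucas m1 : ℕ) : ℝ))
    (hsol2 : X k2 = ((lucas n2 * lucas m2 : ℕ) : ℝ)) :
    (k1 : ℝ) < (k2 : ℝ) ∧ (k2 : ℝ) < (4 / 3) * (max n1 n2 : ℕ) + 4 := by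
  obtain ⟨s, hs⟩ : ∃ s : ℝ, s = Real.sqrt 2 := ⟨_, rfl⟩
  have hs2 : s ^ 2 = 2 := by rw [hs]; exact Real.sq_sqrt (by norm_num)
  have hs0 : 0 ≤ s := by rw [hs]; exact Real.sqrt_nonneg 2
  have hs14 : (1.4 : ℝ) ≤ s := by nlinarith
  -- δ ≥ 1 + √2
  have hsd : s ≤ Real.sqrt d := by rw [hs]; exact Real.sqrt_le_sqrt (by exact_mod_cast hd)
  have hsd0 : 0 ≤ Real.sqrt d := Real.sqrt_nonneg _
  have hx1' : (1:ℝ) ≤ (x1:ℝ) := by exact_mod_cast hx1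
  have hy1' : (1:ℝ) ≤ (y1:ℝ) := by exact_mod_cast hy1
  have hδge : 1 + s ≤ δ := by
    rw [hδ]
    nlinarith
  have hδpos : 0 < δ := by nlinarith
  -- δ * η = ε
  have hdd : Real.sqrt d ^ 2 = (d:ℝ) := Real.sq_sqrt (by positivity)
  have hεcast : (x1:ℝ)^2 - (d:ℝ) * (y1:ℝ)^2 = (ε:ℝ) := by exact_mod_cast hε
  have hprod : δ * η = (ε:ℝ) := by
    rw [hδ, hη]
    linear_combination hεcast - (y1:ℝ)^2 * hdd
  have habs : δ * |η| = 1 := by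
    rcases hεpm with h | h <;> rw [h] at hprod <;> push_cast at hprod
    · rw [abs_of_nonneg (by nlinarith : (0:ℝ) ≤ η)]; linarith
    · rw [abs_of_nonpos (by nlinarith : η ≤ (0:ℝ))]; linarith
  have hηle : |η| ≤ 1 := by nlinarith [abs_nonneg η]
  have hηk : -1 ≤ η ^ k2 := by
    have h1 : |η ^ k2| ≤ 1 := by
      rw [abs_pow]
      exact pow_le_one₀ (abs_nonneg _) hηle
    have := abs_le.mp h1
    linarith [this.1]
  -- bound on lucas product
  obtain ⟨N, hN⟩ : ∃ N : ℕ, N = max n1 n2 := ⟨_, rfl⟩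
  have hn2N : n2 ≤ N := hN ▸ le_max_right _ _
  have hm2N : m2 ≤ N := le_trans hnm2 hn2N
  have hb : (5/3:ℝ) ≥ 1 := by norm_num
  have hLn : (lucas n2 : ℝ) ≤ 2 * (5/3:ℝ)^N :=
    le_trans (lucas_le_pow n2) (by
      have := pow_le_pow_right₀ hb hn2N
      nlinarith [pow_pos (show (0:ℝ) < 5/3 by norm_num) n2])
  have hLm : (lucas m2 : ℝ) ≤ 2 * (5/3:ℝ)^N :=
    le_trans (lucas_le_pow m2) (by
      have := pow_le_pow_right₀ hb hm2N
      nlinarith [pow_pos (show (0:ℝ) < 5/3 by norm_num) m2])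
  have hLpos : (0:ℝ) ≤ (lucas n2 : ℝ) := by positivity
  have hLpos' : (0:ℝ) ≤ (lucas m2 : ℝ) := by positivity
  have hLL : (lucas n2 : ℝ) * (lucas m2 : ℝ) ≤ 4 * (5/3:ℝ)^(2*N) := by
    have h4 : (2 * (5/3:ℝ)^N) * (2 * (5/3:ℝ)^N) = 4 * (5/3:ℝ)^(2*N) := by
      rw [two_mul N, pow_add]; ring
    calc (lucas n2 : ℝ) * (lucas m2 : ℝ)
        ≤ (2 * (5/3:ℝ)^N) * (2 * (5/3:ℝ)^N) :=
          mul_le_mul hLn hLm hLpos' (by positivity)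
      _ = 4 * (5/3:ℝ)^(2*N) := h4
  -- δ^k2 ≤ 9 * (5/3)^(2N)
  have hXeq : δ ^ k2 + η ^ k2 = 2 * ((lucas n2 : ℝ) * (lucas m2 : ℝ)) := by
    have := hX k2
    rw [hsol2] at this
    push_cast at this
    linarith
  have hpow1 : (0:ℝ) < (5/3:ℝ)^(2*N) := by positivity
  have hone : (1:ℝ) ≤ (5/3:ℝ)^(2*N) := one_le_pow₀ hb
  have hδk : δ ^ k2 ≤ 9 * (5/3:ℝ)^(2*N) := by nlinarith
  have hskey : (1 + s) ^ k2 ≤ 9 * (5/3:ℝ)^(2*N) :=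
    le_trans (pow_le_pow_left₀ (by linarith) hδge k2) hδk
  -- cube it
  have hcube : (1 + s) ^ (3 * k2) ≤ 729 * (5/3:ℝ)^(6*N) := by
    have h3 : ((1+s) ^ k2) ^ 3 ≤ (9 * (5/3:ℝ)^(2*N)) ^ 3 :=
      pow_le_pow_left₀ (by positivity) hskey 3
    calc (1 + s) ^ (3 * k2) = ((1+s) ^ k2) ^ 3 := by rw [mul_comm, pow_mul]
      _ ≤ (9 * (5/3:ℝ)^(2*N)) ^ 3 := h3
      _ = 729 * (5/3:ℝ)^(6*N) := by
          rw [mul_pow, ← pow_mul]; norm_num; ring_nf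
  have h14 : (1+s)^4 = 17 + 12 * s := by linear_combination (s^2 + 4*s + 8) * hs2
  have h18 : (1+s)^8 = 577 + 408 * s := by
    have he : (1+s)^8 = ((1+s)^4)^2 := by ring
    rw [he, h14]; linear_combination 144 * hs2
  have h6le : (5/3:ℝ)^6 ≤ (1+s)^4 := by rw [h14]; nlinarith
  have h729 : (729:ℝ) < (1+s)^8 := by rw [h18]; nlinarith
  have hpowN : (5/3:ℝ)^(6*N) ≤ (1+s)^(4*N) := by
    calc (5/3:ℝ)^(6*N) = ((5/3:ℝ)^6)^N := by rw [← pow_mul]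
      _ ≤ ((1+s)^4)^N := pow_le_pow_left₀ (by positivity) h6le N
      _ = (1+s)^(4*N) := by rw [← pow_mul]
  have hfin : (1 + s) ^ (3 * k2) < (1 + s) ^ (8 + 4*N) := by
    calc (1 + s) ^ (3 * k2) ≤ 729 * (5/3:ℝ)^(6*N) := hcube
      _ ≤ 729 * (1+s)^(4*N) := mul_le_mul_of_nonneg_left hpowN (by norm_num)
      _ < (1+s)^8 * (1+s)^(4*N) :=
          mul_lt_mul_of_pos_right h729 (pow_pos (by linarith) (4*N))
      _ = (1+s)^(8 + 4*N) := by rw [← pow_add]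
  have hlt : 3 * k2 < 8 + 4 * N :=
    (pow_lt_pow_iff_right₀ (by linarith : (1:ℝ) < 1 + s)).mp hfin
  constructor
  · exact_mod_cast hk12
  · have : (3:ℝ) * k2 < 8 + 4 * N := by exact_mod_cast hlt
    rw [← hN]
    linarith
end

section
/- If k ≥ 1, n ≥ m ≥ 0 are integers with x_k = L_n·L_m, then |δᵏ·2⁻¹·α^{−(n+m)} − 1| < 6/α^{2m}. -/
/-!
Binet's formula `L_j = φ^j + ψ^j` with `ψ = -φ⁻¹` gives `L_j φ^(-j) = 1 + q^j` for `q = -φ⁻²`,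
so `L_n L_m φ^(-(n+m)) = (1 + q^n)(1 + q^m)` is within `3 φ^(-2m)` of `1`. Since
`x_k = (δ^k + η^k)/2` with `|η| = 1/(x₁ + y₁√d) ≤ 1`, `δ^k/2` differs from `L_n L_m` by at
most `1/2`, which after division by `φ^(n+m)` costs at most another `φ^(-2m)/2`.
-/

open Real goldenRatio

theorem alpha_eq_goldenRatio : alpha = φ := rfl

theorem lucas_eq_goldenRatio_pow_add_goldenConj_pow :
    ∀ n : ℕ, (lucas n : ℝ) = φ ^ n + ψ ^ n
  | 0 => by norm_num [lucas]
  | 1 => by simp [lucas, goldenRatio_add_goldenConj]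
  | n + 2 => by
    rw [lucas, Nat.cast_add, lucas_eq_goldenRatio_pow_add_goldenConj_pow (n + 1),
      lucas_eq_goldenRatio_pow_add_goldenConj_pow n]
    linear_combination -φ ^ n * goldenRatio_sq - ψ ^ n * goldenConj_sq

theorem lucas_mul_inv_goldenRatio_pow (n : ℕ) :
    (lucas n : ℝ) * φ⁻¹ ^ n = 1 + (-φ⁻¹ ^ 2) ^ n := by
  rw [lucas_eq_goldenRatio_pow_add_goldenConj_pow, add_mul, ← mul_pow, ← mul_pow,
    mul_inv_cancel₀ goldenRatio_ne_zero, one_pow, ← neg_neg ψ, ← inv_goldenRatio]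
  ring

theorem abs_one_add_pow_mul_one_add_pow_sub_one_le {q : ℝ} (hq : |q| ≤ 1) {m n : ℕ}
    (hmn : m ≤ n) : |(1 + q ^ n) * (1 + q ^ m) - 1| ≤ 3 * |q| ^ m := by
  have hn : |q| ^ n ≤ |q| ^ m := pow_le_pow_of_le_one (abs_nonneg q) hq hmn
  have hnm : |q| ^ (n + m) ≤ |q| ^ m := pow_le_pow_of_le_one (abs_nonneg q) hq (by omega)
  calc |(1 + q ^ n) * (1 + q ^ m) - 1| = |q ^ n + q ^ m + q ^ (n + m)| := by
        congr 1; ring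
    _ ≤ |q ^ n| + |q ^ m| + |q ^ (n + m)| := abs_add_three _ _ _
    _ ≤ 3 * |q| ^ m := by simp only [abs_pow]; linarith

theorem inv_goldenRatio_pos : 0 < φ⁻¹ := inv_pos.2 goldenRatio_pos

theorem inv_goldenRatio_le_one : φ⁻¹ ≤ 1 := inv_le_one_of_one_le₀ one_lt_goldenRatio.le

theorem abs_lucas_mul_lucas_mul_inv_goldenRatio_pow_sub_one_le {m n : ℕ} (hmn : m ≤ n) :
    |(lucas n * lucas m : ℝ) * (φ⁻¹ ^ n * φ⁻¹ ^ m) - 1| ≤ 3 * (φ⁻¹ ^ 2) ^ m := by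
  have hq : |-φ⁻¹ ^ 2| = φ⁻¹ ^ 2 := by
    rw [abs_neg, abs_of_pos (pow_pos inv_goldenRatio_pos 2)]
  have hq1 : |-φ⁻¹ ^ 2| ≤ 1 :=
    hq.trans_le (pow_le_one₀ inv_goldenRatio_pos.le inv_goldenRatio_le_one)
  rw [mul_mul_mul_comm, lucas_mul_inv_goldenRatio_pow, lucas_mul_inv_goldenRatio_pow]
  simpa only [hq] using abs_one_add_pow_mul_one_add_pow_sub_one_le hq1 hmn

theorem abs_sub_mul_sqrt_le_one {d x y : ℕ} (hx : 1 ≤ x)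
    (hpell : (x : ℤ) ^ 2 - d * y ^ 2 = 1 ∨ (x : ℤ) ^ 2 - d * y ^ 2 = -1) :
    |(x : ℝ) - y * √d| ≤ 1 := by
  have hprod : |((x : ℝ) + y * √d) * ((x : ℝ) - y * √d)| = 1 := by
    have hsq : ((x : ℝ) + y * √d) * ((x : ℝ) - y * √d) =
        (((x : ℤ) ^ 2 - d * y ^ 2 : ℤ) : ℝ) := by
      push_cast
      linear_combination (-(y : ℝ) ^ 2) * Real.sq_sqrt (Nat.cast_nonneg d)
    rcases hpell with h | h <;> simp [hsq, h]
  have hone : (1 : ℝ) ≤ x + y * √d := by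
    have : (1 : ℝ) ≤ x := by exact_mod_cast hx
    nlinarith [Real.sqrt_nonneg d, (Nat.cast_nonneg y : (0 : ℝ) ≤ y)]
  rw [abs_mul, abs_of_pos (by linarith)] at hprod
  nlinarith [abs_nonneg ((x : ℝ) - y * √d)]

theorem stmt_6_general
    (d x1 y1 : ℕ) (ε : ℤ) (δ η : ℝ) (X : ℕ → ℝ)
    (hx1 : 1 ≤ x1)
    (hε : (x1 : ℤ) ^ 2 - (d : ℤ) * (y1 : ℤ) ^ 2 = ε)
    (hεpm : ε = 1 ∨ ε = -1)
    (hη : η = (x1 : ℝ) - (y1 : ℝ) * Real.sqrt d)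
    (hX : ∀ k : ℕ, X k = (δ ^ k + η ^ k) / 2)
    (k n m : ℕ) (hnm : m ≤ n)
    (hsol : X k = ((lucas n * lucas m : ℕ) : ℝ)) :
    |δ ^ k * 2⁻¹ * alpha ^ (-((n : ℤ) + (m : ℤ))) - 1| < 6 / alpha ^ (2 * m) := by
  have hη1 : |η| ≤ 1 := hη ▸ abs_sub_mul_sqrt_le_one hx1 (hε ▸ hεpm)
  have hδk : δ ^ k * 2⁻¹ = lucas n * lucas m - η ^ k / 2 := by
    rw [← Nat.cast_mul, ← hsol, hX]; ring
  have hpow : alpha ^ (-((n : ℤ) + (m : ℤ))) = φ⁻¹ ^ n * φ⁻¹ ^ m := by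
    rw [alpha_eq_goldenRatio, neg_add, zpow_add₀ goldenRatio_ne_zero, zpow_neg, zpow_neg,
      zpow_natCast, zpow_natCast, inv_pow, inv_pow]
  have hrhs : 6 / alpha ^ (2 * m) = 6 * (φ⁻¹ ^ 2) ^ m := by
    rw [alpha_eq_goldenRatio, ← pow_mul, inv_pow, div_eq_mul_inv]
  have herr : |η ^ k / 2 * (φ⁻¹ ^ n * φ⁻¹ ^ m)| ≤ (φ⁻¹ ^ 2) ^ m / 2 := by
    have hηk : |η| ^ k ≤ 1 := pow_le_one₀ (abs_nonneg η) hη1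
    have hnm' : φ⁻¹ ^ n ≤ φ⁻¹ ^ m :=
      pow_le_pow_of_le_one inv_goldenRatio_pos.le inv_goldenRatio_le_one hnm
    rw [abs_mul, abs_div, abs_pow, abs_two, abs_of_pos
      (mul_pos (pow_pos inv_goldenRatio_pos n) (pow_pos inv_goldenRatio_pos m))]
    calc |η| ^ k / 2 * (φ⁻¹ ^ n * φ⁻¹ ^ m)
        ≤ 1 / 2 * (φ⁻¹ ^ m * φ⁻¹ ^ m) := by gcongr
      _ = (φ⁻¹ ^ 2) ^ m / 2 := by ring
  rw [hδk, hpow, hrhs, sub_mul, sub_right_comm]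
  calc _ ≤ 3 * (φ⁻¹ ^ 2) ^ m + (φ⁻¹ ^ 2) ^ m / 2 :=
        (abs_sub _ _).trans
          (add_le_add (abs_lucas_mul_lucas_mul_inv_goldenRatio_pow_sub_one_le hnm) herr)
    _ < 6 * (φ⁻¹ ^ 2) ^ m := by
        linarith [pow_pos (pow_pos inv_goldenRatio_pos 2) m]

theorem stmt_6
    (d x1 y1 : ℕ) (ε : ℤ) (δ η : ℝ) (X : ℕ → ℝ)
    (hd : 2 ≤ d) (hdsf : Squarefree d)
    (hx1 : 1 ≤ x1) (hy1 : 1 ≤ y1)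
    (hε : (x1 : ℤ) ^ 2 - (d : ℤ) * (y1 : ℤ) ^ 2 = ε)
    (hεpm : ε = 1 ∨ ε = -1)
    (hmin : ∀ x y : ℕ, 1 ≤ x → 1 ≤ y →
      ((x : ℤ) ^ 2 - (d : ℤ) * (y : ℤ) ^ 2 = 1 ∨
        (x : ℤ) ^ 2 - (d : ℤ) * (y : ℤ) ^ 2 = -1) → x1 ≤ x)
    (hδ : δ = (x1 : ℝ) + (y1 : ℝ) * Real.sqrt d)
    (hη : η = (x1 : ℝ) - (y1 : ℝ) * Real.sqrt d)
    (hX : ∀ k : ℕ, X k = (δ ^ k + η ^ k) / 2)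
    (k n m : ℕ) (hk : 1 ≤ k) (hnm : m ≤ n)
    (hsol : X k = ((lucas n * lucas m : ℕ) : ℝ)) :
    |δ ^ k * 2⁻¹ * alpha ^ (-((n : ℤ) + (m : ℤ))) - 1| < 6 / alpha ^ (2 * m) :=
  stmt_6_general d x1 y1 ε δ η X hx1 hε hεpm hη hX k n m hnm hsol
end

section
/- Under the two-solution setup, for each pair (i, j) with {i, j} = {1, 2}, the real number (2·L_{m_i})^{k_j}·2^{−k_i}·α^{−(k_j·n_i − k_i·(n_j + m_j))} is different from 1; equivalently, (2·L_{m_i})^{k_j} ≠ 2^{k_i}·α^{k_j·n_i − k_i·(n_j + m_j)}, where the exponent k_j·n_i − k_i·(n_j + m_j) is an integer. -/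
/-!
If the exponent `E` of `α` is nonzero, `2 ^ k * α ^ E` is irrational (a nonzero power of `α` is
`a + b α` with `a, b` rational and `b ≠ 0`), so it cannot be the integer on the left. If `E = 0`,
the identity reads `(2 L_{m_i}) ^ {k_j} = 2 ^ {k_i}`. For `(i, j) = (1, 2)` this contradicts
`k₁ < k₂`. For `(i, j) = (2, 1)` it makes `L_{m₂}` a power of `2`; as no Lucas number is divisible
by `8`, either `L_{m₂} = 2` and `k₂ = 2 k₁`, or `L_{m₂} = 4`, `k₂ = 3 k₁` and `n₂ = 3 (n₁ + m₁)`.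
The duplication formula `x_{2k} = 2 x_k² - ε^k` then gives a parity contradiction, and the
triplication formula `x_{3k} = 4 x_k³ - 3 ε^k x_k`, together with
`L_{3N} = L_N³ - 3 (-1)^N L_N`, gives `4 (B³ - 3 s B) = 4 A³ - 3 e A` with `A, B ≥ 1` and
`e, s = ±1`, which is impossible by size once one notes `4 ∣ A`.
-/

open Real goldenRatio

theorem lucas_pos : ∀ n, 0 < lucas n
  | 0 => by decide
  | 1 => by decide
  | n + 2 => Nat.add_pos_right _ (lucas_pos n)

theorem coe_lucas_eq : ∀ n, (lucas n : ℝ) = φ ^ n + ψ ^ n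
  | 0 => by norm_num [lucas]
  | 1 => by norm_num [lucas]
  | n + 2 => by
    rw [lucas, Nat.cast_add, coe_lucas_eq n, coe_lucas_eq (n + 1)]
    linear_combination (-φ ^ n) * goldenRatio_sq + (-ψ ^ n) * goldenConj_sq

theorem lucas_three_mul (n : ℕ) :
    (lucas (3 * n) : ℤ) = lucas n ^ 3 - 3 * (-1) ^ n * lucas n := by
  have hprod : (-1 : ℝ) ^ n = φ ^ n * ψ ^ n := by rw [← mul_pow, goldenRatio_mul_goldenConj]
  have : (lucas (3 * n) : ℝ) = lucas n ^ 3 - 3 * (-1) ^ n * lucas n := by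
    rw [coe_lucas_eq, coe_lucas_eq, pow_mul', pow_mul', hprod]
    ring
  exact_mod_cast this

theorem lucas_add_twelve_mod_eight : ∀ n, lucas (n + 12) % 8 = lucas n % 8
  | 0 => by decide
  | 1 => by decide
  | n + 2 => by
    have h₀ := lucas_add_twelve_mod_eight n
    have h₁ := lucas_add_twelve_mod_eight (n + 1)
    simp only [lucas] at h₀ h₁ ⊢
    omega

theorem lucas_mod_eight_ne_zero (n : ℕ) : lucas n % 8 ≠ 0 := by
  induction n using Nat.strong_induction_on with
  | _ n ih =>
    obtain hn | hn := Nat.lt_or_ge n 12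
    · interval_cases n <;> decide
    · obtain ⟨m, rfl⟩ := Nat.exists_eq_add_of_le' hn
      rw [lucas_add_twelve_mod_eight]
      exact ih m (by omega)

theorem irrational_goldenRatio_pow {n : ℕ} (hn : n ≠ 0) : Irrational (φ ^ n) := by
  obtain ⟨m, rfl⟩ := Nat.exists_eq_succ_of_ne_zero hn
  rw [← goldenRatio_mul_fib_succ_add_fib]
  exact (goldenRatio_irrational.mul_natCast (Nat.fib_pos.2 m.succ_pos).ne').add_natCast _

theorem irrational_goldenRatio_zpow {E : ℤ} (hE : E ≠ 0) : Irrational (φ ^ E) := by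
  have hn : E.natAbs ≠ 0 := Int.natAbs_ne_zero.2 hE
  rcases Int.natAbs_eq E with h | h <;> rw [h]
  · rw [zpow_natCast]
    exact irrational_goldenRatio_pow hn
  · rw [zpow_neg, zpow_natCast]
    exact (irrational_goldenRatio_pow hn).inv

theorem natCast_eq_two_pow_mul_goldenRatio_zpow {c k : ℕ} {E : ℤ}
    (h : (c : ℝ) = 2 ^ k * φ ^ E) : E = 0 ∧ c = 2 ^ k := by
  obtain rfl | hE := eq_or_ne E 0
  · exact ⟨rfl, by exact_mod_cast h.trans (mul_one _)⟩
  · have := (irrational_goldenRatio_zpow hE).natCast_mul (pow_ne_zero k two_ne_zero)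
    push_cast at this
    exact absurd (h ▸ this) (Nat.not_irrational c)

theorem two_mul_pow_ne_two_pow {a b L : ℕ} (hab : a < b) (hL : 0 < L) : (2 * L) ^ b ≠ 2 ^ a := by
  have h₁ : 2 ^ b ≤ (2 * L) ^ b := Nat.pow_le_pow_left (by omega) b
  have h₂ : 2 ^ a < 2 ^ b := Nat.pow_lt_pow_right (by norm_num) hab
  omega

theorem exists_eq_two_pow_of_two_mul_pow_eq {a b L : ℕ} (h : (2 * L) ^ a = 2 ^ b) (ha : 0 < a) :
    ∃ t, L = 2 ^ t ∧ (t + 1) * a = b := by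
  have hdvd : L ∣ 2 ^ b := h ▸ (Dvd.intro_left 2 rfl).trans (dvd_pow_self _ ha.ne')
  obtain ⟨t, -, rfl⟩ := (Nat.dvd_prime_pow Nat.prime_two).1 hdvd
  refine ⟨t, rfl, Nat.pow_right_injective le_rfl ?_⟩
  simpa only [← pow_succ', ← pow_mul] using h

theorem lucas_eq_two_or_four_of_two_mul_pow_eq {m a b : ℕ} (h : (2 * lucas m) ^ a = 2 ^ b)
    (ha : 0 < a) (hab : a < b) : lucas m = 2 ∧ b = 2 * a ∨ lucas m = 4 ∧ b = 3 * a := by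
  obtain ⟨t, hL, rfl⟩ := exists_eq_two_pow_of_two_mul_pow_eq h ha
  have ht : t < 3 := by
    by_contra! ht
    exact lucas_mod_eight_ne_zero m (hL ▸ Nat.mod_eq_zero_of_dvd (pow_dvd_pow 2 ht))
  interval_cases t <;> omega

theorem four_mul_cube_sub_ne {A B e s : ℤ} (hA : 0 < A) (hB : 0 < B) (he : e = 1 ∨ e = -1)
    (hs : s = 1 ∨ s = -1) : 4 * (B ^ 3 - 3 * s * B) ≠ 4 * A ^ 3 - 3 * e * A := by
  intro h
  obtain rfl | hne := eq_or_ne A B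
  · rcases he with rfl | rfl <;> rcases hs with rfl | rfl <;> linarith
  -- reducing `h` modulo 4 shows `4 ∣ A`
  have hA4 : 4 ≤ A := by rcases he with rfl | rfl <;> rcases hs with rfl | rfl <;> omega
  have hQ : 0 < A ^ 2 + A * B + B ^ 2 := by positivity
  have hrhs : |12 * s * B - 3 * e * A| ≤ 12 * B + 3 * A := by
    rcases he with rfl | rfl <;> rcases hs with rfl | rfl <;> rw [abs_le] <;> constructor <;> linarith
  have hlhs : 4 * (A ^ 2 + A * B + B ^ 2) ≤ |12 * s * B - 3 * e * A| := by
    have hsub : 1 ≤ |B - A| := Int.one_le_abs (sub_ne_zero.2 hne.symm)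
    rw [show 12 * s * B - 3 * e * A = 4 * ((B - A) * (A ^ 2 + A * B + B ^ 2)) by
      linear_combination -h, abs_mul, abs_mul, abs_of_pos hQ, abs_of_pos four_pos]
    nlinarith
  nlinarith

theorem four_mul_lucas_three_mul_ne (N : ℕ) {A e : ℤ} (hA : 0 < A) (he : e = 1 ∨ e = -1) :
    4 * (lucas (3 * N) : ℤ) ≠ 4 * A ^ 3 - 3 * e * A := by
  rw [lucas_three_mul]
  exact four_mul_cube_sub_ne hA (mod_cast lucas_pos N) he (neg_one_pow_eq_or ℤ N)

section HalfPowAddPow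

variable {δ η : ℝ} {X : ℕ → ℝ}

theorem half_pow_add_pow_two_mul (hX : ∀ k, X k = (δ ^ k + η ^ k) / 2) (k : ℕ) :
    X (2 * k) = 2 * X k ^ 2 - (δ * η) ^ k := by
  simp only [hX, pow_mul', mul_pow]
  ring

theorem half_pow_add_pow_three_mul (hX : ∀ k, X k = (δ ^ k + η ^ k) / 2) (k : ℕ) :
    X (3 * k) = 4 * X k ^ 3 - 3 * (δ * η) ^ k * X k := by
  simp only [hX, pow_mul', mul_pow]
  ring

theorem half_pow_add_pow_two_mul_ne_mul_two (hX : ∀ k, X k = (δ ^ k + η ^ k) / 2) {ε : ℤ}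
    (hδη : δ * η = ε) (hε : ε = 1 ∨ ε = -1) {k a : ℕ} (ha : X k = a) (b : ℕ) :
    X (2 * k) ≠ (b * 2 : ℕ) := by
  intro hb
  have hεk : ε ^ k = 1 ∨ ε ^ k = -1 := Int.isUnit_iff.1 ((Int.isUnit_iff.2 hε).pow k)
  have h := half_pow_add_pow_two_mul hX k
  rw [hb, ha, hδη] at h
  have : ((b * 2 : ℕ) : ℤ) = 2 * (a : ℤ) ^ 2 - ε ^ k := by exact_mod_cast h
  omega

theorem half_pow_add_pow_three_mul_ne_lucas_mul_four (hX : ∀ k, X k = (δ ^ k + η ^ k) / 2)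
    {ε : ℤ} (hδη : δ * η = ε) (hε : ε = 1 ∨ ε = -1) {k a : ℕ} (ha : X k = a) (ha₀ : 0 < a)
    (N : ℕ) : X (3 * k) ≠ (lucas (3 * N) * 4 : ℕ) := by
  intro hN
  have hεk : ε ^ k = 1 ∨ ε ^ k = -1 := Int.isUnit_iff.1 ((Int.isUnit_iff.2 hε).pow k)
  have h := half_pow_add_pow_three_mul hX k
  rw [hN, ha, hδη] at h
  have : ((lucas (3 * N) * 4 : ℕ) : ℤ) = 4 * (a : ℤ) ^ 3 - 3 * ε ^ k * a := by exact_mod_cast h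
  push_cast at this
  exact four_mul_lucas_three_mul_ne N (Int.natCast_pos.2 ha₀) hεk (by linarith)

end HalfPowAddPow

theorem stmt_16_general
    (d x1 y1 : ℕ) (ε : ℤ) (δ η : ℝ) (X : ℕ → ℝ)
    (hε : (x1 : ℤ) ^ 2 - (d : ℤ) * (y1 : ℤ) ^ 2 = ε)
    (hεpm : ε = 1 ∨ ε = -1)
    (hδ : δ = (x1 : ℝ) + (y1 : ℝ) * Real.sqrt d)
    (hη : η = (x1 : ℝ) - (y1 : ℝ) * Real.sqrt d)
    (hX : ∀ k : ℕ, X k = (δ ^ k + η ^ k) / 2)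
    (k1 n1 m1 k2 n2 m2 : ℕ)
    (hk1 : 1 ≤ k1) (hk12 : k1 < k2)
    (hsol1 : X k1 = ((lucas n1 * lucas m1 : ℕ) : ℝ))
    (hsol2 : X k2 = ((lucas n2 * lucas m2 : ℕ) : ℝ)) :
    ((2 * lucas m1 : ℕ) : ℝ) ^ k2 ≠
      (2 : ℝ) ^ k1 * alpha ^ ((k2 : ℤ) * (n1 : ℤ) - (k1 : ℤ) * ((n2 : ℤ) + (m2 : ℤ))) ∧
    ((2 * lucas m2 : ℕ) : ℝ) ^ k1 ≠
      (2 : ℝ) ^ k2 * alpha ^ ((k1 : ℤ) * (n2 : ℤ) - (k2 : ℤ) * ((n1 : ℤ) + (m1 : ℤ))) := by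
  have hδη : δ * η = ε := by
    rw [hδ, hη, ← hε]
    push_cast
    linear_combination (-(y1 : ℝ) ^ 2) * Real.sq_sqrt (Nat.cast_nonneg d)
  refine ⟨fun h => ?_, fun h => ?_⟩
  all_goals rw [← Nat.cast_pow] at h
  · obtain ⟨-, h⟩ := natCast_eq_two_pow_mul_goldenRatio_zpow h
    exact two_mul_pow_ne_two_pow hk12 (lucas_pos m1) h
  obtain ⟨hE, h⟩ := natCast_eq_two_pow_mul_goldenRatio_zpow h
  rcases lucas_eq_two_or_four_of_two_mul_pow_eq h hk1 hk12 with ⟨hL, rfl⟩ | ⟨hL, rfl⟩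
  · exact half_pow_add_pow_two_mul_ne_mul_two hX hδη hεpm hsol1 _ (hL ▸ hsol2)
  · have hn2 : n2 = 3 * (n1 + m1) := by
      have : (k1 : ℤ) * n2 = k1 * (3 * (n1 + m1)) := by
        push_cast at hE
        linear_combination hE
      exact_mod_cast mul_left_cancel₀ (by positivity) this
    exact half_pow_add_pow_three_mul_ne_lucas_mul_four hX hδη hεpm hsol1
      (Nat.mul_pos (lucas_pos n1) (lucas_pos m1)) (n1 + m1) (hn2 ▸ hL ▸ hsol2)

theorem stmt_16
    (d x1 y1 : ℕ) (ε : ℤ) (δ η : ℝ) (X : ℕ → ℝ)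
    (hd : 2 ≤ d) (hdsf : Squarefree d)
    (hx1 : 1 ≤ x1) (hy1 : 1 ≤ y1)
    (hε : (x1 : ℤ) ^ 2 - (d : ℤ) * (y1 : ℤ) ^ 2 = ε)
    (hεpm : ε = 1 ∨ ε = -1)
    (hmin : ∀ x y : ℕ, 1 ≤ x → 1 ≤ y →
      ((x : ℤ) ^ 2 - (d : ℤ) * (y : ℤ) ^ 2 = 1 ∨
        (x : ℤ) ^ 2 - (d : ℤ) * (y : ℤ) ^ 2 = -1) → x1 ≤ x)
    (hδ : δ = (x1 : ℝ) + (y1 : ℝ) * Real.sqrt d)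
    (hη : η = (x1 : ℝ) - (y1 : ℝ) * Real.sqrt d)
    (hX : ∀ k : ℕ, X k = (δ ^ k + η ^ k) / 2)
    (k1 n1 m1 k2 n2 m2 : ℕ)
    (hk1 : 1 ≤ k1) (hk2 : 1 ≤ k2) (hk12 : k1 < k2)
    (hnm1 : m1 ≤ n1) (hnm2 : m2 ≤ n2)
    (hsol1 : X k1 = ((lucas n1 * lucas m1 : ℕ) : ℝ))
    (hsol2 : X k2 = ((lucas n2 * lucas m2 : ℕ) : ℝ)) :
    ((2 * lucas m1 : ℕ) : ℝ) ^ k2 ≠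
      (2 : ℝ) ^ k1 * alpha ^ ((k2 : ℤ) * (n1 : ℤ) - (k1 : ℤ) * ((n2 : ℤ) + (m2 : ℤ))) ∧
    ((2 * lucas m2 : ℕ) : ℝ) ^ k1 ≠
      (2 : ℝ) ^ k2 * alpha ^ ((k1 : ℤ) * (n2 : ℤ) - (k2 : ℤ) * ((n1 : ℤ) + (m1 : ℤ))) :=
  stmt_16_general d x1 y1 ε δ η X hε hεpm hδ hη hX k1 n1 m1 k2 n2 m2 hk1 hk12 hsol1 hsol2
end
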